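/- Let σ, π ∈ S_k and ρ_1, ρ_2 ∈ S(M_{k,r}). Then d_K(σ ∗ ρ_1, π ∗ ρ_2) ≥ d_K(σ, π) + d_K(ρ_1, ρ_2). -/

import Mathlib

/-- `AdjTrans σ π` : the sequence `π` is obtained from the sequence `σ` by exchanging
two distinct adjacent elements (an adjacent transposition). -/
def AdjTrans (σ π : List ℤ) : Prop :=
  ∃ (l₁ l₂ : List ℤ) (a b : ℤ), a ≠ b ∧ σ = l₁ ++ a :: b :: l₂ ∧ π = l₁ ++ b :: a :: l₂

/-- `StepsTo n σ π` : `π` can be obtained from `σ` by a sequence of `n` adjacent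
transpositions. -/
def StepsTo : ℕ → List ℤ → List ℤ → Prop
  | 0 => fun σ π => σ = π
  | n + 1 => fun σ π => ∃ τ, AdjTrans σ τ ∧ StepsTo n τ π

/-- The Kendall τ-distance between two sequences: the minimum number of adjacent
transpositions needed to transform one into the other. -/
noncomputable def dK (σ π : List ℤ) : ℕ := sInf {n | StepsTo n σ π}

/-- The list `[a, a+1, ..., a+len-1]` of integers. -/
def rangeList (a len : ℕ) : List ℤ := (List.range' a len).map (fun x => (x : ℤ))

/-- The substitution map `T_θ`: the `r`-th occurrence (from the left, `0`-indexed) of a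
rank `a` in `σ` is replaced by the `r`-th entry of the list `θ a`. -/
def Tmap (θ : ℤ → List ℤ) (σ : List ℤ) : List ℤ :=
  (List.range σ.length).map (fun j =>
    (θ (σ.getD j 0)).getD ((σ.take j).count (σ.getD j 0)) 0)

/-- `psiEntry σ a s` : the number of positions in `σ` strictly to the right of the `s`-th
occurrence (`0`-indexed) of `a` in `σ` that hold an element smaller than `a`. -/
def psiEntry (σ : List ℤ) (a : ℤ) (s : ℕ) : ℕ :=
  (σ.drop (((σ.indexesOf a).getD s σ.length) + 1)).countP (fun x => decide (x < a))

/-- The Manhattan distance between two vectors of naturals (presented as lists). -/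
def manhattanL (x y : List ℕ) : ℕ :=
  ∑ i ∈ Finset.range (max x.length y.length), ((x.getD i 0 : ℤ) - (y.getD i 0 : ℤ)).natAbs

/-- The Lee distance over `Z_q` between two vectors with entries in `{0, …, q-1}`
(presented as lists). -/
def leeDistL (q : ℕ) (x y : List ℕ) : ℕ :=
  ∑ i ∈ Finset.range (max x.length y.length),
    min (((x.getD i 0 : ℤ) - (y.getD i 0 : ℤ)).natAbs)
      (q - ((x.getD i 0 : ℤ) - (y.getD i 0 : ℤ)).natAbs)

/-- The Lee distance between two vectors over `ZMod q`. -/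
def zmodLee {q N : ℕ} (x y : Fin N → ZMod q) : ℕ :=
  ∑ i, min (x i - y i).val (y i - x i).val

/-- `permList k σ` : `σ` is (an ordering representing) a permutation of `{1, …, k}`. -/
def permList (k : ℕ) (σ : List ℤ) : Prop :=
  (↑σ : Multiset ℤ) = (↑(rangeList 1 k) : Multiset ℤ)

/-- The multiset `M_{k,r} = {0^k, k+1, …, k+r}`. -/
def Mkr (k r : ℕ) : Multiset ℤ :=
  Multiset.replicate k (0 : ℤ) + (↑(rangeList (k + 1) r) : Multiset ℤ)

/-- `α_{↓k}` : delete from `α` all elements larger than `k`. -/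
def restrictTo (k : ℕ) (α : List ℤ) : List ℤ :=
  α.filter (fun x => decide (x ≤ (k : ℤ)))

/-- `α_{k↦0}` : replace in `α` every element of `{1, …, k}` by `0`. -/
def mapToZero (k : ℕ) (α : List ℤ) : List ℤ :=
  α.map (fun x => if 1 ≤ x ∧ x ≤ (k : ℤ) then 0 else x)

/-- `star σ ρ = σ ∗ ρ` : replace the zeros of `ρ`, from left to right, by the elements
of `σ` in order. -/
def starP : List ℤ → List ℤ → List ℤ
  | _, [] => []
  | σ, x :: ρ' => if x = 0 then σ.headD 0 :: starP σ.tail ρ' else x :: starP σ ρ'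

/-!
An adjacent transposition of a sequence of positive integers moves exactly one of the two
projections `restrictTo k` (delete the entries `> k`) and `mapToZero k` (collapse `{1, …, k}`
to `0`) by an adjacent transposition and fixes the other: if both swapped entries are `≤ k`
the collapse forgets the swap, otherwise the restriction does, and the swapped entries stay
distinct after collapsing. Since `restrictTo k (σ ∗ ρ) = σ` and `mapToZero k (σ ∗ ρ) = ρ`,
a shortest path from `σ ∗ ρ₁` to `π ∗ ρ₂` (one exists, as both order the same multiset)
projects to paths from `σ` to `π` and from `ρ₁` to `ρ₂` of total length at most its own.
-/

namespace AdjTrans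

variable {α β : List ℤ}

theorem perm (h : AdjTrans α β) : α.Perm β := by
  obtain ⟨l₁, l₂, a, b, -, rfl, rfl⟩ := h
  exact List.Perm.append_left l₁ (List.Perm.swap b a l₂)

theorem cons (a : ℤ) (h : AdjTrans α β) : AdjTrans (a :: α) (a :: β) := by
  obtain ⟨l₁, l₂, x, y, hxy, rfl, rfl⟩ := h
  exact ⟨a :: l₁, l₂, x, y, hxy, rfl, rfl⟩

theorem restrictTo_or_mapToZero (k : ℕ) (hpos : ∀ x ∈ α, 1 ≤ x) (h : AdjTrans α β) :
    (AdjTrans (restrictTo k α) (restrictTo k β) ∧ mapToZero k α = mapToZero k β) ∨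
      (restrictTo k α = restrictTo k β ∧ AdjTrans (mapToZero k α) (mapToZero k β)) := by
  obtain ⟨l₁, l₂, a, b, hab, rfl, rfl⟩ := h
  have ha : 1 ≤ a := hpos a (by simp)
  have hb : 1 ≤ b := hpos b (by simp)
  by_cases hk : a ≤ k ∧ b ≤ k
  · refine .inl ⟨⟨restrictTo k l₁, restrictTo k l₂, a, b, hab, ?_, ?_⟩, ?_⟩ <;>
      simp [restrictTo, mapToZero, ha, hb, hk]
  · rw [not_and_or, not_le, not_le] at hk
    refine .inr ⟨?_, mapToZero k l₁, mapToZero k l₂,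
      if 1 ≤ a ∧ a ≤ k then 0 else a, if 1 ≤ b ∧ b ≤ k then 0 else b, ?_, ?_, ?_⟩
    · rcases hk with hk | hk <;> simp [restrictTo, List.filter_cons, not_le.mpr hk]
    · split_ifs <;> omega
    all_goals simp [mapToZero]

end AdjTrans

namespace StepsTo

theorem cons (a : ℤ) : ∀ {n : ℕ} {α β : List ℤ}, StepsTo n α β → StepsTo n (a :: α) (a :: β)
  | 0, _, _, h => congrArg (a :: ·) h
  | _ + 1, _, _, ⟨τ, h₁, h₂⟩ => ⟨a :: τ, h₁.cons a, cons a h₂⟩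

theorem trans : ∀ {m n : ℕ} {α β γ : List ℤ}, StepsTo m α β → StepsTo n β γ →
    StepsTo (m + n) α γ
  | 0, _, _, _, _, rfl, h => by rwa [Nat.zero_add]
  | m + 1, n, _, _, _, ⟨τ, h₁, h₂⟩, h => by
      rw [Nat.add_right_comm]
      exact ⟨τ, h₁, trans h₂ h⟩

theorem exists_restrictTo_mapToZero (k : ℕ) :
    ∀ {n : ℕ} {α β : List ℤ}, (∀ x ∈ α, 1 ≤ x) → StepsTo n α β →
      ∃ n₁ n₂, n₁ + n₂ ≤ n ∧ StepsTo n₁ (restrictTo k α) (restrictTo k β) ∧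
        StepsTo n₂ (mapToZero k α) (mapToZero k β)
  | 0, _, _, _, rfl => ⟨0, 0, le_rfl, rfl, rfl⟩
  | n + 1, α, β, hpos, ⟨τ, hατ, hτβ⟩ => by
    obtain ⟨n₁, n₂, hn, h₁, h₂⟩ :=
      exists_restrictTo_mapToZero k (fun x hx => hpos x (hατ.perm.mem_iff.mpr hx)) hτβ
    rcases hατ.restrictTo_or_mapToZero k hpos with ⟨hadj, heq⟩ | ⟨heq, hadj⟩
    · exact ⟨n₁ + 1, n₂, by omega, ⟨_, hadj, h₁⟩, heq ▸ h₂⟩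
    · exact ⟨n₁, n₂ + 1, by omega, heq ▸ h₁, ⟨_, hadj, h₂⟩⟩

end StepsTo

theorem List.Perm.exists_stepsTo {α β : List ℤ} (h : α.Perm β) : ∃ n, StepsTo n α β := by
  induction h with
  | nil => exact ⟨0, rfl⟩
  | cons a _ ih =>
    obtain ⟨n, hn⟩ := ih
    exact ⟨n, hn.cons a⟩
  | swap a b l =>
    by_cases hab : b = a
    · exact ⟨0, by rw [hab]; rfl⟩
    · exact ⟨1, _, ⟨[], l, b, a, hab, rfl, rfl⟩, rfl⟩
  | trans _ _ ih₁ ih₂ =>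
    obtain ⟨m, hm⟩ := ih₁
    obtain ⟨n, hn⟩ := ih₂
    exact ⟨m + n, hm.trans hn⟩

theorem dK_le {n : ℕ} {α β : List ℤ} (h : StepsTo n α β) : dK α β ≤ n :=
  Nat.sInf_le h

theorem stepsTo_dK {α β : List ℤ} (h : α.Perm β) : StepsTo (dK α β) α β :=
  Nat.sInf_mem h.exists_stepsTo

section starP

variable {k : ℕ}

theorem starP_perm : ∀ {σ ρ : List ℤ}, ρ.count 0 = σ.length →
    (starP σ ρ).Perm (σ ++ ρ.filter (· ≠ 0))
  | [], [], _ => by simp [starP]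
  | _ :: _, [], h => by simp at h
  | σ, x :: ρ, h => by
    by_cases hx : x = 0
    · subst hx
      obtain _ | ⟨a, σ⟩ := σ
      · simp at h
      · simpa [starP] using starP_perm (σ := σ) (ρ := ρ) (by simpa using h)
    · have ih := starP_perm (σ := σ) (ρ := ρ) (by simpa [List.count_cons, hx] using h)
      simpa [starP, hx] using (ih.cons x).trans List.perm_middle.symm

theorem restrictTo_starP :
    ∀ {σ ρ : List ℤ}, (∀ x ∈ σ, x ≤ k) → (∀ x ∈ ρ, x ≠ 0 → k < x) →
      ρ.count 0 = σ.length → restrictTo k (starP σ ρ) = σ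
  | [], [], _, _, _ => rfl
  | _ :: _, [], _, _, h => by simp at h
  | σ, x :: ρ, hσ, hρ, h => by
    by_cases hx : x = 0
    · subst hx
      obtain _ | ⟨a, σ⟩ := σ
      · simp at h
      · have ih := restrictTo_starP (σ := σ) (ρ := ρ) (fun y hy => hσ y (by simp [hy]))
          (fun y hy => hρ y (by simp [hy])) (by simpa using h)
        simpa [starP, restrictTo, hσ a (by simp)] using ih
    · have ih := restrictTo_starP (σ := σ) (ρ := ρ) hσ (fun y hy => hρ y (by simp [hy]))
        (by simpa [List.count_cons, hx] using h)
      have hxk : ¬ x ≤ k := not_le.mpr (hρ x (by simp) hx)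
      simpa [starP, restrictTo, hx, hxk] using ih

theorem mapToZero_starP :
    ∀ {σ ρ : List ℤ}, (∀ x ∈ σ, 1 ≤ x ∧ x ≤ k) → (∀ x ∈ ρ, x = 0 ∨ k < x) →
      mapToZero k (starP σ ρ) = ρ
  | _, [], _, _ => rfl
  | σ, x :: ρ, hσ, hρ => by
    have hρ' : ∀ y ∈ ρ, y = 0 ∨ k < y := fun y hy => hρ y (by simp [hy])
    by_cases hx : x = 0
    · subst hx
      obtain _ | ⟨a, σ⟩ := σ
      · simpa [starP, mapToZero] using mapToZero_starP (σ := []) hσ hρ'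
      · simpa [starP, mapToZero, hσ a (by simp)] using
          mapToZero_starP (σ := σ) (fun y hy => hσ y (by simp [hy])) hρ'
    · have hxk : ¬ (1 ≤ x ∧ x ≤ k) := by
        rcases hρ x (by simp) with h | h <;> omega
      simpa [starP, mapToZero, hx, hxk] using mapToZero_starP hσ hρ'

end starP

theorem mem_rangeList {a len : ℕ} {x : ℤ} : x ∈ rangeList a len ↔ a ≤ x ∧ x < a + len := by
  simp only [rangeList, List.pure_def, List.bind_eq_flatMap, List.map_id_fun', id_eq,
    List.mem_flatMap, List.mem_range'_1, List.mem_singleton]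
  constructor
  · rintro ⟨m, hm, rfl⟩
    omega
  · intro hx
    exact ⟨x.toNat, by omega, by omega⟩

theorem permList.mem {k : ℕ} {σ : List ℤ} (hσ : permList k σ) {x : ℤ} (hx : x ∈ σ) :
    1 ≤ x ∧ x ≤ k := by
  rw [← Multiset.mem_coe, hσ, Multiset.mem_coe, mem_rangeList] at hx
  omega

theorem permList.length {k : ℕ} {σ : List ℤ} (hσ : permList k σ) : σ.length = k := by
  simp [(Multiset.coe_eq_coe.mp hσ).length_eq, rangeList]

theorem mem_of_coe_eq_Mkr {k r : ℕ} {ρ : List ℤ} (hρ : (ρ : Multiset ℤ) = Mkr k r)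
    {x : ℤ} (hx : x ∈ ρ) : x = 0 ∨ k < x := by
  rw [← Multiset.mem_coe, hρ, Mkr, Multiset.mem_add, Multiset.mem_replicate] at hx
  rcases hx with ⟨-, rfl⟩ | hx
  · exact .inl rfl
  · rw [Multiset.mem_coe, mem_rangeList] at hx
    omega

theorem count_zero_of_coe_eq_Mkr {k r : ℕ} {ρ : List ℤ} (hρ : (ρ : Multiset ℤ) = Mkr k r) :
    ρ.count 0 = k := by
  have hnotin : (0 : ℤ) ∉ rangeList (k + 1) r := by rw [mem_rangeList]; omega
  simpa [Mkr, Multiset.count_replicate, List.count_eq_zero_of_not_mem hnotin] using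
    congrArg (Multiset.count 0) hρ

section permList

variable {k r : ℕ} {σ ρ : List ℤ} (hσ : permList k σ) (hρ : (ρ : Multiset ℤ) = Mkr k r)
include hσ hρ

theorem count_zero_eq_length_of_permList : ρ.count 0 = σ.length := by
  rw [count_zero_of_coe_eq_Mkr hρ, hσ.length]

theorem restrictTo_starP_of_permList : restrictTo k (starP σ ρ) = σ :=
  restrictTo_starP (fun _ hx => (hσ.mem hx).2)
    (fun _ hx => (mem_of_coe_eq_Mkr hρ hx).resolve_left)
    (count_zero_eq_length_of_permList hσ hρ)

theorem mapToZero_starP_of_permList : mapToZero k (starP σ ρ) = ρ :=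
  mapToZero_starP (fun _ hx => hσ.mem hx) (fun _ hx => mem_of_coe_eq_Mkr hρ hx)

theorem one_le_of_mem_starP {x : ℤ} (hx : x ∈ starP σ ρ) : 1 ≤ x := by
  rw [(starP_perm (count_zero_eq_length_of_permList hσ hρ)).mem_iff, List.mem_append,
    List.mem_filter, decide_eq_true_iff] at hx
  rcases hx with hx | ⟨hx, hx0⟩
  · exact (hσ.mem hx).1
  · have := mem_of_coe_eq_Mkr hρ hx
    omega

theorem starP_perm_starP {π ρ' : List ℤ} (hπ : permList k π)
    (hρ' : (ρ' : Multiset ℤ) = Mkr k r) : (starP σ ρ).Perm (starP π ρ') :=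
  (starP_perm (count_zero_eq_length_of_permList hσ hρ)).trans <|
    ((Multiset.coe_eq_coe.mp (hσ.trans hπ.symm)).append
      ((Multiset.coe_eq_coe.mp (hρ.trans hρ'.symm)).filter _)).trans
    (starP_perm (count_zero_eq_length_of_permList hπ hρ')).symm

end permList

/-- Lemma 7. Let `σ, π ∈ S_k` and `ρ₁, ρ₂ ∈ S(M_{k,r})`.  Then
`d_K(σ ∗ ρ₁, π ∗ ρ₂) ≥ d_K(σ, π) + d_K(ρ₁, ρ₂)`. -/
theorem stmt13 (k r : ℕ) (σ π ρ₁ ρ₂ : List ℤ)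
    (hσ : permList k σ) (hπ : permList k π)
    (hρ₁ : (↑ρ₁ : Multiset ℤ) = Mkr k r) (hρ₂ : (↑ρ₂ : Multiset ℤ) = Mkr k r) :
    dK σ π + dK ρ₁ ρ₂ ≤ dK (starP σ ρ₁) (starP π ρ₂) := by
  have hpath := stepsTo_dK (starP_perm_starP hσ hρ₁ hπ hρ₂)
  obtain ⟨n₁, n₂, hn, h₁, h₂⟩ :=
    hpath.exists_restrictTo_mapToZero k (fun _ => one_le_of_mem_starP hσ hρ₁)
  rw [restrictTo_starP_of_permList hσ hρ₁, restrictTo_starP_of_permList hπ hρ₂] at h₁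
  rw [mapToZero_starP_of_permList hσ hρ₁, mapToZero_starP_of_permList hπ hρ₂] at h₂
  exact (add_le_add (dK_le h₁) (dK_le h₂)).trans hn
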